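/- Let ρ > 0, ν ∈ ℝ with cos(πν) ≠ 0, and let r' ∈ EuclideanSpace ℝ (Fin 3) be nonzero. Then G_ν(r, r') tends to the finite value −(2ν + 1)‖r'‖/(4π cos(πν) (‖r'‖² + ρ²)) as r tends to the image point −(ρ²/‖r'‖²)·r' (through r ∉ {r', −(ρ²/‖r'‖²)·r'}). -/

import Mathlib

/-!
Write `θ` for the arccos in `fisheyeGreen`. Since `cos θ = -1 + 2ρ²‖r - r'‖²/D` with
`D = (‖r‖² + ρ²)(‖r'‖² + ρ²)`, and `D - ρ²‖r - r'‖² = ‖r‖²‖r'‖² + 2ρ²⟪r, r'⟫ + ρ⁴`, the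
half-angle formula gives `sin (θ/2) = √(‖r‖²‖r'‖² + 2ρ²⟪r, r'⟫ + ρ⁴) / √D`. Hence
`G_ν(r, r') = -1/(4π cos(πν)) · sin((ν + 1/2)θ) / (‖r - r'‖ sin(θ/2))`: the apparent singularity
is a ratio of sines. The radicand equals `‖r'‖²‖r - r₀‖²` for the image point `r₀`, so `θ → 0⁺`
as `r → r₀`, the ratio of sines tends to `2ν + 1`, and `‖r₀ - r'‖ = (‖r'‖² + ρ²)/‖r'‖`.
-/

/-- The three-dimensional Maxwell fish-eye Green's function. -/
noncomputable def fisheyeGreen (ρ ν : ℝ) (r r' : EuclideanSpace ℝ (Fin 3)) : ℝ :=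
  -(1 / (4 * Real.pi * Real.cos (Real.pi * ν)))
    * (Real.sqrt ((‖r‖ ^ 2 + ρ ^ 2) * (‖r'‖ ^ 2 + ρ ^ 2))
        / (‖r - r'‖
            * Real.sqrt (‖r‖ ^ 2 * ‖r'‖ ^ 2 + 2 * ρ ^ 2 * (inner ℝ r r' : ℝ) + ρ ^ 4)))
    * Real.sin ((ν + 1 / 2)
        * Real.arccos (-1 + 2 * ρ ^ 2 * ‖r - r'‖ ^ 2
            / ((‖r‖ ^ 2 + ρ ^ 2) * (‖r'‖ ^ 2 + ρ ^ 2))))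

open Real Filter Topology

namespace Real

lemma sin_eq_mul_sinc (x : ℝ) : sin x = x * sinc x := by
  rcases eq_or_ne x 0 with rfl | hx
  · simp
  · rw [sinc_of_ne_zero hx, mul_div_cancel₀ _ hx]

lemma sin_half_arccos {x : ℝ} (h₁ : -1 ≤ x) (h₂ : x ≤ 1) :
    sin (arccos x / 2) = √((1 - x) / 2) := by
  rw [sin_half_eq_sqrt (arccos_nonneg x) (by linarith [arccos_le_pi x, pi_pos]), cos_arccos h₁ h₂]

lemma tendsto_sin_mul_div_sin_half (a : ℝ) :
    Tendsto (fun θ => sin (a * θ) / sin (θ / 2)) (𝓝[≠] 0) (𝓝 (2 * a)) := by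
  have hcont : ContinuousAt (fun θ => 2 * a * sinc (a * θ) / sinc (θ / 2)) 0 :=
    ContinuousAt.div (by fun_prop) (by fun_prop) (by simp)
  have hlim := hcont.tendsto.mono_left (nhdsWithin_le_nhds (s := {0}ᶜ))
  simp only [mul_zero, zero_div, sinc_zero, div_one, mul_one] at hlim
  refine hlim.congr' ?_
  filter_upwards [self_mem_nhdsWithin] with θ (hθ : θ ≠ 0)
  rw [sin_eq_mul_sinc (a * θ), sin_eq_mul_sinc (θ / 2),
    ← mul_div_mul_left (2 * a * sinc (a * θ)) _ (div_ne_zero hθ two_ne_zero)]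
  ring_nf

end Real

section FisheyeAngle

variable {E : Type*} [NormedAddCommGroup E]

/-- Under stereographic projection onto the sphere of radius `ρ`, this is the angle between `r` and
the antipode of `r'`, whose projection is the image point `-(ρ ^ 2 / ‖r'‖ ^ 2) • r'`. -/
noncomputable def fisheyeAngle (ρ : ℝ) (r r' : E) : ℝ :=
  arccos (-1 + 2 * ρ ^ 2 * ‖r - r'‖ ^ 2 / ((‖r‖ ^ 2 + ρ ^ 2) * (‖r'‖ ^ 2 + ρ ^ 2)))

lemma continuous_fisheyeAngle {ρ : ℝ} (hρ : ρ ≠ 0) (r' : E) :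
    Continuous (fisheyeAngle ρ · r') :=
  continuous_arccos.comp <| continuous_const.add <|
    Continuous.div (by fun_prop) (by fun_prop) fun r => by positivity

variable [InnerProductSpace ℝ E]

lemma fisheye_mul_sub_sq_norm_sub (ρ : ℝ) (r r' : E) :
    (‖r‖ ^ 2 + ρ ^ 2) * (‖r'‖ ^ 2 + ρ ^ 2) - ρ ^ 2 * ‖r - r'‖ ^ 2
      = ‖r‖ ^ 2 * ‖r'‖ ^ 2 + 2 * ρ ^ 2 * inner ℝ r r' + ρ ^ 4 := by
  rw [norm_sub_sq_real]
  ring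

lemma fisheye_quadratic_nonneg (ρ : ℝ) (r r' : E) :
    0 ≤ ‖r‖ ^ 2 * ‖r'‖ ^ 2 + 2 * ρ ^ 2 * inner ℝ r r' + ρ ^ 4 := by
  have hcs : -(‖r‖ * ‖r'‖) ≤ inner ℝ r r' := neg_le_of_abs_le (abs_real_inner_le_norm r r')
  nlinarith [sq_nonneg (‖r‖ * ‖r'‖ - ρ ^ 2), sq_nonneg ρ]

lemma fisheye_quadratic_eq {r' : E} (hr' : r' ≠ 0) (ρ : ℝ) (r : E) :
    ‖r‖ ^ 2 * ‖r'‖ ^ 2 + 2 * ρ ^ 2 * inner ℝ r r' + ρ ^ 4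
      = ‖r'‖ ^ 2 * ‖r - -(ρ ^ 2 / ‖r'‖ ^ 2) • r'‖ ^ 2 := by
  have hn : ‖r'‖ ≠ 0 := norm_ne_zero_iff.mpr hr'
  rw [neg_smul, sub_neg_eq_add, norm_add_sq_real, real_inner_smul_right, norm_smul,
    Real.norm_of_nonneg (by positivity)]
  field_simp

lemma sin_half_fisheyeAngle {ρ : ℝ} (hρ : ρ ≠ 0) (r r' : E) :
    sin (fisheyeAngle ρ r r' / 2)
      = √(‖r‖ ^ 2 * ‖r'‖ ^ 2 + 2 * ρ ^ 2 * inner ℝ r r' + ρ ^ 4)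
        / √((‖r‖ ^ 2 + ρ ^ 2) * (‖r'‖ ^ 2 + ρ ^ 2)) := by
  have hD : 0 < (‖r‖ ^ 2 + ρ ^ 2) * (‖r'‖ ^ 2 + ρ ^ 2) := by positivity
  have hQ := fisheye_quadratic_nonneg ρ r r'
  rw [← fisheye_mul_sub_sq_norm_sub] at hQ ⊢
  have hx₀ : 0 ≤ 2 * ρ ^ 2 * ‖r - r'‖ ^ 2 / ((‖r‖ ^ 2 + ρ ^ 2) * (‖r'‖ ^ 2 + ρ ^ 2)) := by
    positivity
  have hx₁ : 2 * ρ ^ 2 * ‖r - r'‖ ^ 2 / ((‖r‖ ^ 2 + ρ ^ 2) * (‖r'‖ ^ 2 + ρ ^ 2)) ≤ 2 := by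
    rw [div_le_iff₀ hD]
    linarith
  rw [fisheyeAngle, sin_half_arccos (by linarith) (by linarith), ← sqrt_div hQ]
  congr 1
  field_simp
  ring

lemma fisheyeAngle_eq_zero_iff {ρ : ℝ} (hρ : ρ ≠ 0) {r' : E} (hr' : r' ≠ 0) (r : E) :
    fisheyeAngle ρ r r' = 0 ↔ r = -(ρ ^ 2 / ‖r'‖ ^ 2) • r' := by
  have hθ₀ : 0 ≤ fisheyeAngle ρ r r' := arccos_nonneg _
  have hθ₁ : fisheyeAngle ρ r r' ≤ π := arccos_le_pi _
  have hD : 0 < (‖r‖ ^ 2 + ρ ^ 2) * (‖r'‖ ^ 2 + ρ ^ 2) := by positivity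
  calc fisheyeAngle ρ r r' = 0 ↔ sin (fisheyeAngle ρ r r' / 2) = 0 := by
        rw [sin_eq_zero_iff_of_lt_of_lt (by linarith [pi_pos]) (by linarith [pi_pos]),
          div_eq_zero_iff, or_iff_left two_ne_zero]
    _ ↔ ‖r'‖ ^ 2 * ‖r - -(ρ ^ 2 / ‖r'‖ ^ 2) • r'‖ ^ 2 = 0 := by
        rw [sin_half_fisheyeAngle hρ, div_eq_zero_iff,
          sqrt_eq_zero (fisheye_quadratic_nonneg ρ r r'), sqrt_eq_zero hD.le, or_iff_left hD.ne',
          fisheye_quadratic_eq hr']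
    _ ↔ r = -(ρ ^ 2 / ‖r'‖ ^ 2) • r' := by
        simp only [mul_eq_zero, pow_eq_zero_iff two_ne_zero, norm_eq_zero, hr', sub_eq_zero,
          false_or]

lemma tendsto_fisheyeAngle_image {ρ : ℝ} (hρ : ρ ≠ 0) {r' : E} (hr' : r' ≠ 0) :
    Tendsto (fisheyeAngle ρ · r') (𝓝[≠] (-(ρ ^ 2 / ‖r'‖ ^ 2) • r')) (𝓝[≠] 0) := by
  have h₀ : fisheyeAngle ρ (-(ρ ^ 2 / ‖r'‖ ^ 2) • r') r' = 0 :=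
    (fisheyeAngle_eq_zero_iff hρ hr' _).mpr rfl
  refine tendsto_nhdsWithin_of_tendsto_nhds_of_eventually_within _ ?_ ?_
  · exact h₀ ▸ (continuous_fisheyeAngle hρ r').continuousAt.tendsto.mono_left nhdsWithin_le_nhds
  · filter_upwards [self_mem_nhdsWithin] with r hr
    exact mt (fisheyeAngle_eq_zero_iff hρ hr' r).mp hr

lemma norm_fisheye_image_sub {r' : E} (hr' : r' ≠ 0) (ρ : ℝ) :
    ‖-(ρ ^ 2 / ‖r'‖ ^ 2) • r' - r'‖ = (‖r'‖ ^ 2 + ρ ^ 2) / ‖r'‖ := by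
  have hn : 0 < ‖r'‖ := norm_pos_iff.mpr hr'
  have : -(ρ ^ 2 / ‖r'‖ ^ 2) • r' - r' = -((ρ ^ 2 / ‖r'‖ ^ 2 + 1) • r') := by module
  rw [this, norm_neg, norm_smul, Real.norm_of_nonneg (by positivity)]
  field_simp
  ring

end FisheyeAngle

lemma fisheyeGreen_eq_div_mul_sin_div_sin_half {ρ : ℝ} (hρ : ρ ≠ 0) (ν : ℝ)
    (r r' : EuclideanSpace ℝ (Fin 3)) :
    fisheyeGreen ρ ν r r' = -(1 / (4 * π * cos (π * ν))) / ‖r - r'‖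
      * (sin ((ν + 1 / 2) * fisheyeAngle ρ r r') / sin (fisheyeAngle ρ r r' / 2)) := by
  rw [sin_half_fisheyeAngle hρ, fisheyeGreen, fisheyeAngle]
  simp only [div_eq_mul_inv, mul_inv, inv_inv]
  ring

theorem fisheye_green_finite_at_image_point_general
    (ρ ν : ℝ) (hρ : 0 < ρ)
    (r' : EuclideanSpace ℝ (Fin 3)) (hr' : r' ≠ 0) :
    Filter.Tendsto (fun r => fisheyeGreen ρ ν r r')
      (nhdsWithin (-(ρ ^ 2 / ‖r'‖ ^ 2) • r')
        ({r', -(ρ ^ 2 / ‖r'‖ ^ 2) • r'}ᶜ : Set (EuclideanSpace ℝ (Fin 3))))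
      (nhds (-(2 * ν + 1) * ‖r'‖
          / (4 * Real.pi * Real.cos (Real.pi * ν) * (‖r'‖ ^ 2 + ρ ^ 2)))) := by
  set r₀ := -(ρ ^ 2 / ‖r'‖ ^ 2) • r'
  have hr₀ : ‖r₀ - r'‖ = (‖r'‖ ^ 2 + ρ ^ 2) / ‖r'‖ := norm_fisheye_image_sub hr' ρ
  have hS : 𝓝[{r', r₀}ᶜ] r₀ ≤ 𝓝[≠] r₀ :=
    nhdsWithin_mono _ (Set.compl_subset_compl.mpr (Set.subset_insert _ _))
  have hratio := (tendsto_sin_mul_div_sin_half (ν + 1 / 2)).comp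
    ((tendsto_fisheyeAngle_image hρ.ne' hr').mono_left hS)
  have hcoef : Tendsto (fun r => -(1 / (4 * π * cos (π * ν))) / ‖r - r'‖) (𝓝 r₀)
      (𝓝 (-(1 / (4 * π * cos (π * ν))) / ‖r₀ - r'‖)) :=
    continuousAt_const.div (by fun_prop) (by rw [hr₀]; positivity)
  convert (hcoef.mono_left nhdsWithin_le_nhds).mul hratio using 2
  · exact fisheyeGreen_eq_div_mul_sin_div_sin_half hρ.ne' ν _ r'
  · have hn : ‖r'‖ ≠ 0 := norm_ne_zero_iff.mpr hr'
    rw [hr₀]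
    field_simp

theorem fisheye_green_finite_at_image_point
    (ρ ν : ℝ) (hρ : 0 < ρ) (hν : Real.cos (Real.pi * ν) ≠ 0)
    (r' : EuclideanSpace ℝ (Fin 3)) (hr' : r' ≠ 0) :
    Filter.Tendsto (fun r => fisheyeGreen ρ ν r r')
      (nhdsWithin (-(ρ ^ 2 / ‖r'‖ ^ 2) • r')
        ({r', -(ρ ^ 2 / ‖r'‖ ^ 2) • r'}ᶜ : Set (EuclideanSpace ℝ (Fin 3))))
      (nhds (-(2 * ν + 1) * ‖r'‖
          / (4 * Real.pi * Real.cos (Real.pi * ν) * (‖r'‖ ^ 2 + ρ ^ 2)))) :=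
  fisheye_green_finite_at_image_point_general ρ ν hρ r' hr'
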